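/- For all non-empty sets A_i ⊆ ℝ^{d_i}, 1 ≤ i ≤ m, the counting dimension of the product satisfies max_{1≤i≤m} cdim(A_i) ≤ cdim(A_1 × ⋯ × A_m) ≤ Σ_{i=1}^m cdim(A_i), where the product set is viewed as a subset of ℝ^{d_1+⋯+d_m}. The same inequalities hold for the mass dimension mdim. -/

import Mathlib

open Set MeasureTheory Filter
open scoped ENNReal NNReal

noncomputable section

variable {ι : Type*} [Fintype ι]

/-- A (half-open) cube in `ℝ^ι` based at `a` with side length `s`. -/
def cube (a : EuclideanSpace ℝ ι) (s : ℝ) : Set (EuclideanSpace ℝ ι) :=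
  {x | ∀ i, a i ≤ x i ∧ x i < a i + s}

/-- Coordinatewise floor map. -/
def floorPt (x : EuclideanSpace ℝ ι) : EuclideanSpace ℝ ι := WithLp.toLp 2 (fun i => (⌊x i⌋ : ℝ))

/-- `⌊A⌋`, the image of `A` under the coordinatewise floor map. -/
def floorSet (A : Set (EuclideanSpace ℝ ι)) : Set (EuclideanSpace ℝ ι) := floorPt '' A

/-- The α-counting measure of `A`. -/
def countMeas (α : ℝ) (A : Set (EuclideanSpace ℝ ι)) : ℝ≥0∞ :=
  ⨅ ℓ : ℝ, ⨆ (a : EuclideanSpace ℝ ι) (s : ℝ) (_ : ℓ ≤ s ∧ 0 < s),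
    ((floorSet A ∩ cube a s).encard : ℝ≥0∞) / ENNReal.ofReal (s ^ α)

/-- The counting dimension of `A`. -/
def cdim (A : Set (EuclideanSpace ℝ ι)) : ℝ :=
  sInf {α : ℝ | 0 ≤ α ∧ countMeas α A = 0}

/-- The centered cube `[-ℓ, ℓ)^ι`. -/
def centeredCube (ℓ : ℝ) : Set (EuclideanSpace ℝ ι) :=
  cube (WithLp.toLp 2 (fun _ => -ℓ) : EuclideanSpace ℝ ι) (2 * ℓ)

/-- The α-mass measure of `A`. -/
def massMeas (α : ℝ) (A : Set (EuclideanSpace ℝ ι)) : ℝ≥0∞ :=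
  ⨅ L : ℝ, ⨆ (ℓ : ℝ) (_ : L ≤ ℓ ∧ 0 < ℓ),
    ((floorSet A ∩ centeredCube ℓ).encard : ℝ≥0∞) / ENNReal.ofReal ((2 * ℓ) ^ α)

/-- The (upper) mass dimension of `A`. -/
def mdim (A : Set (EuclideanSpace ℝ ι)) : ℝ :=
  sInf {α : ℝ | 0 ≤ α ∧ massMeas α A = 0}


/-- The product set `A_1 × ⋯ × A_m` viewed inside `ℝ^{d_1 + ⋯ + d_m}`, realized via the
sigma-type index `(i : Fin m) × Fin (dv i)`. -/
def prodSet (m : ℕ) (dv : Fin m → ℕ) (A : ∀ i, Set (EuclideanSpace ℝ (Fin (dv i)))) :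
    Set (EuclideanSpace ℝ ((i : Fin m) × Fin (dv i))) :=
  {x | ∀ i : Fin m, ((WithLp.toLp 2 (fun j => x ⟨i, j⟩) : EuclideanSpace ℝ (Fin (dv i))) ∈ A i)}

/-! Both dimensions are growth exponents: `cdim A` is the infimum of the `α ≥ 0` with
`sup_a |⌊A⌋ ∩ cube a s| = o(s ^ α)`, and `mdim A` the same for `|⌊A⌋ ∩ [-ℓ, ℓ)^d|` against
`(2ℓ) ^ α`. As the floor map acts coordinatewise, the lattice points of the product inside a cube
are the product of the lattice points of the factors inside the factor cubes. So the product's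
count is at most the product of the factors' counts, giving the sum bound, and at least each
factor's count once every other factor has a point in its cube, giving the max bound. -/

set_option linter.unusedSectionVars false

open scoped Topology

section GrowthExponent

variable {X : Type*} {l : Filter X} {φ : X → ℝ} {f g : X → ℝ≥0∞}

def IsLittleOPow (l : Filter X) (f : X → ℝ≥0∞) (φ : X → ℝ) (α : ℝ) : Prop :=
  Tendsto (fun x => f x / ENNReal.ofReal (φ x ^ α)) l (𝓝 0)

def growthExponents (l : Filter X) (f : X → ℝ≥0∞) (φ : X → ℝ) : Set ℝ :=
  {α | 0 ≤ α ∧ IsLittleOPow l f φ α}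

def growthDim (l : Filter X) (f : X → ℝ≥0∞) (φ : X → ℝ) : ℝ :=
  sInf (growthExponents l f φ)

lemma IsLittleOPow.of_le {α : ℝ} (hg : IsLittleOPow l g φ α) (hfg : f ≤ᶠ[l] g) :
    IsLittleOPow l f φ α :=
  tendsto_nhds_bot_mono hg (hfg.mono fun _ h => ENNReal.div_le_div_right h _)

lemma IsLittleOPow.eventually_le_rpow {α : ℝ} (hf : IsLittleOPow l f φ α) :
    ∀ᶠ x in l, f x ≤ ENNReal.ofReal (φ x ^ α) := by
  filter_upwards [ENNReal.tendsto_nhds_zero.1 hf 1 one_pos] with x hx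
  simpa using (ENNReal.div_le_iff_le_mul (.inr ENNReal.one_ne_top) (.inr one_ne_zero)).1 hx

lemma isLittleOPow_of_le_mul_rpow {C : ℝ≥0∞} {d α : ℝ} (hC : C ≠ ⊤) (hdα : d < α)
    (hφ : Tendsto φ l atTop) (hf : ∀ᶠ x in l, f x ≤ C * ENNReal.ofReal (φ x ^ d)) :
    IsLittleOPow l f φ α := by
  have hdecay : Tendsto (fun x => C * ENNReal.ofReal (φ x ^ (d - α))) l (𝓝 0) := by
    have := ENNReal.Tendsto.const_mul (ENNReal.tendsto_ofReal
      ((tendsto_rpow_neg_atTop (sub_pos.2 hdα)).comp hφ)) (.inr hC)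
    simpa [Function.comp_def, neg_sub] using this
  refine tendsto_nhds_bot_mono hdecay ?_
  filter_upwards [hf, hφ.eventually_gt_atTop 0] with x hx hpos
  calc f x / ENNReal.ofReal (φ x ^ α)
      ≤ C * ENNReal.ofReal (φ x ^ d) / ENNReal.ofReal (φ x ^ α) := ENNReal.div_le_div_right hx _
    _ = C * ENNReal.ofReal (φ x ^ (d - α)) := by
      rw [mul_div_assoc, ← ENNReal.ofReal_div_of_pos (by positivity), ← Real.rpow_sub hpos]

lemma IsLittleOPow.mono_exponent {α β : ℝ} (hf : IsLittleOPow l f φ α) (hαβ : α < β)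
    (hφ : Tendsto φ l atTop) : IsLittleOPow l f φ β :=
  isLittleOPow_of_le_mul_rpow ENNReal.one_ne_top hαβ hφ (by simpa using hf.eventually_le_rpow)

lemma IsLittleOPow.of_le_prod {κ : Type*} [Fintype κ] {F : X → ℝ≥0∞} {f : κ → X → ℝ≥0∞}
    {β : κ → ℝ} {ε : ℝ} (hf : ∀ i, IsLittleOPow l (f i) φ (β i))
    (hF : ∀ᶠ x in l, F x ≤ ∏ i, f i x) (hε : 0 < ε) (hφ : Tendsto φ l atTop) :
    IsLittleOPow l F φ (∑ i, β i + ε) := by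
  refine isLittleOPow_of_le_mul_rpow ENNReal.one_ne_top (lt_add_of_pos_right _ hε) hφ ?_
  filter_upwards [hF, eventually_all.2 fun i => (hf i).eventually_le_rpow,
    hφ.eventually_gt_atTop 0] with x hFx hfx hpos
  calc F x ≤ ∏ i, f i x := hFx
    _ ≤ ∏ i, ENNReal.ofReal (φ x ^ β i) := Finset.prod_le_prod' fun i _ => hfx i
    _ = 1 * ENNReal.ofReal (φ x ^ ∑ i, β i) := by
      rw [one_mul, Real.rpow_sum_of_pos hpos,
        ENNReal.ofReal_prod_of_nonneg fun i _ => by positivity]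

lemma growthDim_nonneg : 0 ≤ growthDim l f φ :=
  Real.sInf_nonneg fun _ h => h.1

lemma growthDim_le {α : ℝ} (hα : 0 ≤ α) (hf : IsLittleOPow l f φ α) : growthDim l f φ ≤ α :=
  csInf_le ⟨0, fun _ h => h.1⟩ ⟨hα, hf⟩

lemma isLittleOPow_growthDim_add (hf : (growthExponents l f φ).Nonempty)
    (hφ : Tendsto φ l atTop) {ε : ℝ} (hε : 0 < ε) :
    IsLittleOPow l f φ (growthDim l f φ + ε) := by
  obtain ⟨α, hα, hlt⟩ := exists_lt_of_csInf_lt hf (lt_add_of_pos_right (growthDim l f φ) hε)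
  exact hα.2.mono_exponent hlt hφ

lemma growthDim_mono (hfg : f ≤ᶠ[l] g) (hg : (growthExponents l g φ).Nonempty) :
    growthDim l f φ ≤ growthDim l g φ :=
  csInf_le_csInf ⟨0, fun _ h => h.1⟩ hg fun _ h => ⟨h.1, h.2.of_le hfg⟩

lemma growthDim_le_sum {κ : Type*} [Fintype κ] {F : X → ℝ≥0∞} {f : κ → X → ℝ≥0∞}
    (hF : ∀ᶠ x in l, F x ≤ ∏ i, f i x) (hf : ∀ i, (growthExponents l (f i) φ).Nonempty)
    (hφ : Tendsto φ l atTop) :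
    growthDim l F φ ≤ ∑ i, growthDim l (f i) φ := by
  refine le_of_forall_pos_le_add fun ε hε => ?_
  set δ := ε / (Fintype.card κ + 1)
  have hδ : 0 < δ := by positivity
  have hsum : ∑ i, (growthDim l (f i) φ + δ) + δ = ∑ i, growthDim l (f i) φ + ε := by
    have : Fintype.card κ * δ + δ = ε := by simp only [δ]; field_simp
    rw [Finset.sum_add_distrib, Finset.sum_const, Finset.card_univ, nsmul_eq_mul]
    linarith
  rw [← hsum]
  refine growthDim_le ?_ (.of_le_prod (fun i => isLittleOPow_growthDim_add (hf i) hφ hδ) hF hδ hφ)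
  exact add_nonneg (Finset.sum_nonneg fun i _ => add_nonneg growthDim_nonneg hδ.le) hδ.le

end GrowthExponent

lemma iInf_iSup_pos_eq_zero_iff {h : ℝ → ℝ≥0∞} :
    (⨅ L : ℝ, ⨆ (s : ℝ) (_ : L ≤ s ∧ 0 < s), h s) = 0 ↔ Tendsto h atTop (𝓝 0) := by
  rw [ENNReal.tendsto_nhds_zero]
  constructor
  · intro H ε hε
    rw [← H] at hε
    obtain ⟨L, hL⟩ := iInf_lt_iff.1 hε
    filter_upwards [eventually_ge_atTop L, eventually_gt_atTop 0] with s hLs hs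
    exact (le_iSup₂ (f := fun s (_ : L ≤ s ∧ 0 < s) => h s) s ⟨hLs, hs⟩).trans hL.le
  · intro H
    refine nonpos_iff_eq_zero.1 (le_of_forall_gt_imp_ge_of_dense fun ε hε => ?_)
    obtain ⟨L, hL⟩ := eventually_atTop.1 (H ε hε)
    exact iInf_le_of_le L (iSup₂_le fun s hs => hL s hs.1)

def maxCubeCount (A : Set (EuclideanSpace ℝ ι)) (s : ℝ) : ℝ≥0∞ :=
  ⨆ a, ((floorSet A ∩ cube a s).encard : ℝ≥0∞)

def centeredCount (A : Set (EuclideanSpace ℝ ι)) (ℓ : ℝ) : ℝ≥0∞ :=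
  ((floorSet A ∩ centeredCube ℓ).encard : ℝ≥0∞)

lemma countMeas_eq_zero_iff {α : ℝ} {A : Set (EuclideanSpace ℝ ι)} :
    countMeas α A = 0 ↔ IsLittleOPow atTop (maxCubeCount A) id α := by
  rw [IsLittleOPow, ← iInf_iSup_pos_eq_zero_iff, countMeas]
  simp only [maxCubeCount, ENNReal.iSup_div, id]
  congr! 2
  funext L
  rw [iSup_comm]
  exact iSup_congr fun s => iSup_comm

lemma massMeas_eq_zero_iff {α : ℝ} {A : Set (EuclideanSpace ℝ ι)} :
    massMeas α A = 0 ↔ IsLittleOPow atTop (centeredCount A) (2 * ·) α := by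
  rw [IsLittleOPow, ← iInf_iSup_pos_eq_zero_iff]
  rfl

lemma cdim_eq_growthDim (A : Set (EuclideanSpace ℝ ι)) :
    cdim A = growthDim atTop (maxCubeCount A) id := by
  simp only [cdim, growthDim, growthExponents, countMeas_eq_zero_iff]

lemma mdim_eq_growthDim (A : Set (EuclideanSpace ℝ ι)) :
    mdim A = growthDim atTop (centeredCount A) (2 * ·) := by
  simp only [mdim, growthDim, growthExponents, massMeas_eq_zero_iff]

lemma encard_floorSet_inter_cube_le (A : Set (EuclideanSpace ℝ ι)) (a : EuclideanSpace ℝ ι)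
    (s : ℝ) : (floorSet A ∩ cube a s).encard ≤ (⌈s⌉₊ ^ Fintype.card ι : ℕ) := by
  let toInt : EuclideanSpace ℝ ι → ι → ℤ := fun x i => ⌊x i⌋
  have hinj : InjOn toInt (floorSet A) := by
    rintro _ ⟨x, -, rfl⟩ _ ⟨y, -, rfl⟩ h
    ext i
    simpa [toInt, floorPt] using congr_fun h i
  have hmaps : MapsTo toInt (floorSet A ∩ cube a s)
      (univ.pi fun i => Ico ⌈a i⌉ (⌈a i⌉ + ⌈s⌉₊)) := by
    rintro _ ⟨⟨x, -, rfl⟩, hcube⟩ i -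
    obtain ⟨hlo, hhi⟩ := hcube i
    simp only [floorPt, PiLp.toLp_apply] at hlo hhi
    simp only [toInt, floorPt, Int.floor_intCast, mem_Ico]
    constructor
    · exact_mod_cast Int.ceil_le.2 hlo
    · have := hhi.trans_le (add_le_add (Int.le_ceil (a i)) (Nat.le_ceil s))
      exact_mod_cast this
  calc (floorSet A ∩ cube a s).encard
      = (toInt '' (floorSet A ∩ cube a s)).encard :=
        ((hinj.mono inter_subset_left).encard_image).symm
    _ ≤ (univ.pi fun i => Ico ⌈a i⌉ (⌈a i⌉ + ⌈s⌉₊)).encard :=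
        encard_le_encard (image_subset_iff.2 hmaps)
    _ = (⌈s⌉₊ ^ Fintype.card ι : ℕ) := by
        simp [encard_pi_eq_prod_encard, ← Finset.coe_Ico, encard_coe_eq_coe_finsetCard]

lemma maxCubeCount_le (A : Set (EuclideanSpace ℝ ι)) {s : ℝ} (hs : 1 ≤ s) :
    maxCubeCount A s ≤ 2 ^ Fintype.card ι * ENNReal.ofReal (s ^ (Fintype.card ι : ℝ)) := by
  refine iSup_le fun a => ?_
  calc ((floorSet A ∩ cube a s).encard : ℝ≥0∞)
      ≤ ((⌈s⌉₊ ^ Fintype.card ι : ℕ) : ℝ≥0∞) := by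
        exact_mod_cast encard_floorSet_inter_cube_le A a s
    _ ≤ ENNReal.ofReal ((2 * s) ^ Fintype.card ι) := by
        rw [← ENNReal.ofReal_natCast]
        refine ENNReal.ofReal_le_ofReal ?_
        push_cast
        gcongr
        linarith [Nat.ceil_lt_add_one (zero_le_one.trans hs)]
    _ = 2 ^ Fintype.card ι * ENNReal.ofReal (s ^ (Fintype.card ι : ℝ)) := by
        rw [Real.rpow_natCast, mul_pow, ENNReal.ofReal_mul (by positivity),
          ENNReal.ofReal_pow zero_le_two, ENNReal.ofReal_ofNat]

lemma growthExponents_maxCubeCount_nonempty (A : Set (EuclideanSpace ℝ ι)) :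
    (growthExponents atTop (maxCubeCount A) id).Nonempty :=
  ⟨Fintype.card ι + 1, by positivity,
    isLittleOPow_of_le_mul_rpow (ENNReal.pow_ne_top ENNReal.ofNat_ne_top) (lt_add_one _)
      tendsto_id ((eventually_ge_atTop 1).mono fun _ hs => maxCubeCount_le A hs)⟩

lemma centeredCount_le_maxCubeCount (A : Set (EuclideanSpace ℝ ι)) (ℓ : ℝ) :
    centeredCount A ℓ ≤ maxCubeCount A (2 * ℓ) :=
  le_iSup (fun a => ((floorSet A ∩ cube a (2 * ℓ)).encard : ℝ≥0∞)) _

lemma growthExponents_centeredCount_nonempty (A : Set (EuclideanSpace ℝ ι)) :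
    (growthExponents atTop (centeredCount A) (2 * ·)).Nonempty :=
  ⟨Fintype.card ι + 1, by positivity,
    isLittleOPow_of_le_mul_rpow (ENNReal.pow_ne_top ENNReal.ofNat_ne_top) (lt_add_one _)
      (tendsto_id.const_mul_atTop two_pos)
      ((eventually_ge_atTop 1).mono fun ℓ hℓ =>
        (centeredCount_le_maxCubeCount A ℓ).trans (maxCubeCount_le A (by linarith)))⟩

lemma mem_cube_self (a : EuclideanSpace ℝ ι) {s : ℝ} (hs : 0 < s) : a ∈ cube a s :=
  fun _ => ⟨le_rfl, lt_add_of_pos_right _ hs⟩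

lemma eventually_mem_centeredCube (x : EuclideanSpace ℝ ι) :
    ∀ᶠ ℓ in atTop, x ∈ centeredCube ℓ := by
  filter_upwards [eventually_gt_atTop ‖x‖] with ℓ hℓ i
  have hi := abs_le.1 ((Real.norm_eq_abs (x i)) ▸ PiLp.norm_apply_le x i)
  constructor <;> linarith [hi.1, hi.2]

@[simp, norm_cast]
lemma ENat.toENNReal_prod {κ : Type*} (s : Finset κ) (f : κ → ℕ∞) :
    ((∏ i ∈ s, f i : ℕ∞) : ℝ≥0∞) = ∏ i ∈ s, (f i : ℝ≥0∞) :=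
  map_prod ENat.toENNRealRingHom f s

section Product

variable {m : ℕ} {dv : Fin m → ℕ}

def splitPt (x : EuclideanSpace ℝ ((i : Fin m) × Fin (dv i))) (i : Fin m) :
    EuclideanSpace ℝ (Fin (dv i)) :=
  WithLp.toLp 2 fun j => x ⟨i, j⟩

def joinPt (y : ∀ i, EuclideanSpace ℝ (Fin (dv i))) :
    EuclideanSpace ℝ ((i : Fin m) × Fin (dv i)) :=
  WithLp.toLp 2 fun q => y q.1 q.2

lemma splitPt_injective : Function.Injective (splitPt (dv := dv)) := fun x y h => by
  ext ⟨i, j⟩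
  exact congr_arg (· j) (congr_fun h i)

lemma image_splitPt_floorSet_prodSet_inter_cube (A : ∀ i, Set (EuclideanSpace ℝ (Fin (dv i))))
    (a : EuclideanSpace ℝ ((i : Fin m) × Fin (dv i))) (s : ℝ) :
    splitPt '' (floorSet (prodSet m dv A) ∩ cube a s) =
      univ.pi fun i => floorSet (A i) ∩ cube (splitPt a i) s := by
  ext z
  constructor
  · rintro ⟨_, ⟨⟨x, hx, rfl⟩, hcube⟩, rfl⟩ i -
    exact ⟨⟨splitPt x i, hx i, rfl⟩, fun j => hcube ⟨i, j⟩⟩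
  · intro hz
    choose y hyA hyz using fun i => (hz i (mem_univ i)).1
    refine ⟨floorPt (joinPt y), ⟨⟨joinPt y, hyA, rfl⟩, ?_⟩, funext hyz⟩
    rintro ⟨i, j⟩
    have hcube := (hz i (mem_univ i)).2 j
    rw [← hyz i] at hcube
    exact hcube

lemma encard_floorSet_prodSet_inter_cube (A : ∀ i, Set (EuclideanSpace ℝ (Fin (dv i))))
    (a : EuclideanSpace ℝ ((i : Fin m) × Fin (dv i))) (s : ℝ) :
    (floorSet (prodSet m dv A) ∩ cube a s).encard =
      ∏ i, (floorSet (A i) ∩ cube (splitPt a i) s).encard := by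
  rw [← splitPt_injective.encard_image, image_splitPt_floorSet_prodSet_inter_cube,
    encard_pi_eq_prod_encard]

lemma encard_le_encard_floorSet_prodSet_inter_cube
    (A : ∀ i, Set (EuclideanSpace ℝ (Fin (dv i))))
    (a : EuclideanSpace ℝ ((i : Fin m) × Fin (dv i))) (s : ℝ) (i : Fin m)
    (ha : ∀ j ≠ i, (floorSet (A j) ∩ cube (splitPt a j) s).Nonempty) :
    (floorSet (A i) ∩ cube (splitPt a i) s).encard ≤
      (floorSet (prodSet m dv A) ∩ cube a s).encard := by
  rw [encard_floorSet_prodSet_inter_cube]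
  simpa using Finset.prod_le_prod_of_subset_of_one_le' (Finset.subset_univ {i})
    (f := fun j => (floorSet (A j) ∩ cube (splitPt a j) s).encard)
    fun j _ hj => one_le_encard_iff_nonempty.2 (ha j (by simpa using hj))

lemma maxCubeCount_prodSet_le (A : ∀ i, Set (EuclideanSpace ℝ (Fin (dv i)))) (s : ℝ) :
    maxCubeCount (prodSet m dv A) s ≤ ∏ i, maxCubeCount (A i) s :=
  iSup_le fun a => by
    rw [encard_floorSet_prodSet_inter_cube]
    push_cast
    exact Finset.prod_le_prod' fun i _ =>
      le_iSup (fun b => ((floorSet (A i) ∩ cube b s).encard : ℝ≥0∞)) (splitPt a i)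

lemma maxCubeCount_le_prodSet (A : ∀ i, Set (EuclideanSpace ℝ (Fin (dv i))))
    (hA : ∀ i, (A i).Nonempty) (i : Fin m) {s : ℝ} (hs : 0 < s) :
    maxCubeCount (A i) s ≤ maxCubeCount (prodSet m dv A) s := by
  choose p hp using hA
  refine iSup_le fun b => ?_
  let y := Function.update (fun j => floorPt (p j)) i b
  have hyi : splitPt (joinPt y) i = b := by simp [y, splitPt, joinPt]
  have hle := encard_le_encard_floorSet_prodSet_inter_cube A (joinPt y) s i fun j hj =>
    ⟨floorPt (p j), ⟨p j, hp j, rfl⟩, by simpa [y, splitPt, joinPt, hj] using mem_cube_self _ hs⟩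
  rw [hyi] at hle
  exact (ENat.toENNReal_le.2 hle).trans
    (le_iSup (fun a => ((floorSet (prodSet m dv A) ∩ cube a s).encard : ℝ≥0∞)) (joinPt y))

lemma centeredCount_prodSet (A : ∀ i, Set (EuclideanSpace ℝ (Fin (dv i)))) (ℓ : ℝ) :
    centeredCount (prodSet m dv A) ℓ = ∏ i, centeredCount (A i) ℓ := by
  rw [centeredCount, centeredCube, encard_floorSet_prodSet_inter_cube]
  push_cast
  rfl

lemma centeredCount_le_prodSet (A : ∀ i, Set (EuclideanSpace ℝ (Fin (dv i))))
    (hA : ∀ i, (A i).Nonempty) (i : Fin m) :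
    ∀ᶠ ℓ in atTop, centeredCount (A i) ℓ ≤ centeredCount (prodSet m dv A) ℓ := by
  choose p hp using hA
  filter_upwards [eventually_all.2 fun j => eventually_mem_centeredCube (floorPt (p j))]
    with ℓ hℓ
  exact ENat.toENNReal_le.2 (encard_le_encard_floorSet_prodSet_inter_cube A _ _ i
    fun j _ => ⟨floorPt (p j), ⟨p j, hp j, rfl⟩, hℓ j⟩)

end Product

/-- Dimension bounds for product sets: for non-empty `A_i ⊆ ℝ^{d_i}`,
`max_i cdim(A_i) ≤ cdim(A_1 × ⋯ × A_m) ≤ Σ_i cdim(A_i)`, and likewise for `mdim`. -/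
theorem stmt_12 (m : ℕ) (dv : Fin m → ℕ)
    (A : ∀ i, Set (EuclideanSpace ℝ (Fin (dv i)))) (hA : ∀ i, (A i).Nonempty) :
    (∀ i, cdim (A i) ≤ cdim (prodSet m dv A)) ∧
    (cdim (prodSet m dv A) ≤ ∑ i, cdim (A i)) ∧
    (∀ i, mdim (A i) ≤ mdim (prodSet m dv A)) ∧
    (mdim (prodSet m dv A) ≤ ∑ i, mdim (A i)) := by
  simp only [cdim_eq_growthDim, mdim_eq_growthDim]
  refine ⟨fun i => ?_, ?_, fun i => ?_, ?_⟩
  · exact growthDim_mono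
      ((eventually_gt_atTop 0).mono fun _ hs => maxCubeCount_le_prodSet A hA i hs)
      (growthExponents_maxCubeCount_nonempty _)
  · exact growthDim_le_sum (.of_forall (maxCubeCount_prodSet_le A))
      (fun i => growthExponents_maxCubeCount_nonempty _) tendsto_id
  · exact growthDim_mono (centeredCount_le_prodSet A hA i)
      (growthExponents_centeredCount_nonempty _)
  · exact growthDim_le_sum (.of_forall fun ℓ => (centeredCount_prodSet A ℓ).le)
      (fun i => growthExponents_centeredCount_nonempty _) (tendsto_id.const_mul_atTop two_pos)
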